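/- arXiv:0708.4081 — 2 statements merged into one kernel-verified Lean document; each statement's English description precedes it below -/
import Mathlib

section
/- For any 0 < λ < 1 and β ∈ (0,1], the sum ∑_{k=1}^{N} (1-λ)^k k^β is bounded by λ^{-1-β}. -/
/-!
Bernoulli's inequality for exponents in `[0, 1]` gives `(λk)^β ≤ (1 - β) + β λk`, so
`k^β ≤ λ^{-β} ((1 - β) + β λk)`. The sum is then bounded by `λ^{-β}` times a convex combination
of `λ ∑ (1-λ)^k ≤ 1` and `λ² ∑ k (1-λ)^k ≤ 1 - λ`, divided by `λ`.
-/

open Finset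

lemma Real.rpow_le_one_sub_add_mul {y β : ℝ} (hy : 0 ≤ y) (hβ₀ : 0 ≤ β) (hβ₁ : β ≤ 1) :
    y ^ β ≤ 1 - β + β * y := by
  have h := rpow_one_add_le_one_add_mul_self (s := y - 1) (by linarith) hβ₀ hβ₁
  rw [add_sub_cancel] at h
  linarith

lemma Real.rpow_le_rpow_neg_mul_one_sub_add_mul {x c β : ℝ} (hx : 0 ≤ x) (hc : 0 < c)
    (hβ₀ : 0 ≤ β) (hβ₁ : β ≤ 1) :
    x ^ β ≤ c ^ (-β) * (1 - β + β * (c * x)) := by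
  have hcx : x ^ β = c ^ (-β) * (c * x) ^ β := by
    rw [Real.mul_rpow hc.le hx, ← mul_assoc, ← Real.rpow_add hc, neg_add_cancel,
      Real.rpow_zero, one_mul]
  rw [hcx]
  gcongr
  exact Real.rpow_le_one_sub_add_mul (by positivity) hβ₀ hβ₁

section GeometricPartialSums

variable {r : ℝ} (s : Finset ℕ)

lemma sum_pow_le_inv_one_sub (hr₀ : 0 ≤ r) (hr₁ : r < 1) :
    ∑ k ∈ s, r ^ k ≤ (1 - r)⁻¹ :=
  ((summable_geometric_of_lt_one hr₀ hr₁).sum_le_tsum s fun _ _ => by positivity).trans_eq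
    (tsum_geometric_of_lt_one hr₀ hr₁)

lemma sum_natCast_mul_pow_le (hr₀ : 0 ≤ r) (hr₁ : r < 1) :
    ∑ k ∈ s, (k : ℝ) * r ^ k ≤ r / (1 - r) ^ 2 := by
  have hr : ‖r‖ < 1 := by rwa [Real.norm_of_nonneg hr₀]
  exact ((hasSum_coe_mul_geometric_of_norm_lt_one hr).summable.sum_le_tsum s
    fun _ _ => by positivity).trans_eq (tsum_coe_mul_geometric_of_norm_lt_one hr)

end GeometricPartialSums

/-- For any `0 < λ < 1` and `β ∈ (0,1]`, the sum `∑_{k=1}^N (1-λ)^k k^β`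
is bounded by `λ^{-1-β}`. -/
theorem geom_sum_rpow_bound (N : ℕ) (lam β : ℝ)
    (hlam₀ : 0 < lam) (hlam₁ : lam < 1) (hβ₀ : 0 < β) (hβ₁ : β ≤ 1) :
    ∑ k ∈ Finset.Icc 1 N, (1 - lam) ^ k * (k : ℝ) ^ β ≤ lam ^ (-(1 + β)) := by
  have hr₀ : 0 ≤ 1 - lam := by linarith
  have hr₁ : 1 - lam < 1 := by linarith
  have hgeom := sum_pow_le_inv_one_sub (Icc 1 N) hr₀ hr₁
  have harith := sum_natCast_mul_pow_le (Icc 1 N) hr₀ hr₁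
  rw [sub_sub_cancel] at hgeom harith
  calc ∑ k ∈ Icc 1 N, (1 - lam) ^ k * (k : ℝ) ^ β
      ≤ ∑ k ∈ Icc 1 N, (1 - lam) ^ k * (lam ^ (-β) * (1 - β + β * (lam * k))) := by
        gcongr
        exact Real.rpow_le_rpow_neg_mul_one_sub_add_mul (Nat.cast_nonneg _) hlam₀ hβ₀.le hβ₁
    _ = lam ^ (-β) * ((1 - β) * ∑ k ∈ Icc 1 N, (1 - lam) ^ k
          + β * lam * ∑ k ∈ Icc 1 N, (k : ℝ) * (1 - lam) ^ k) := by
        simp only [mul_sum, ← sum_add_distrib]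
        exact sum_congr rfl fun _ _ => by ring
    _ ≤ lam ^ (-β) * ((1 - β) * lam⁻¹ + β * lam * ((1 - lam) / lam ^ 2)) := by
        gcongr
    _ ≤ lam ^ (-β) * lam⁻¹ := by
        gcongr
        field_simp
        nlinarith
    _ = lam ^ (-(1 + β)) := by
        rw [neg_add, Real.rpow_add hlam₀, Real.rpow_neg_one, mul_comm]
end

section
/- Suppose a: [0,1] → ℝ^{p+1} satisfies |a(u) − a(v)| ≤ C|u − v|^β for β ∈ (0,1], and F is a symmetric positive definite matrix with ‖(I−λF)^k‖ ≤ K(1−λδ)^k, 0 < λδ < 1. Then |∑_{k=1}^{t−1} λ (I − λF)^k F (a((t−k)/N) − a(t/N))| = O(1/(λN)^β), uniformly in t ≤ N. -/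
/-!
Each summand is at most `λ · Kn (1 - λδ)^k ‖F‖ · C (k/N)^β` by submultiplicativity of the
operator norm and Hölder continuity. Writing `(k/N)^β = (λδk)^β / (λδN)^β` and using
`x^β ≤ 1 + x`, the sum is dominated by `(λδN)^{-β} ∑ (1 - λδ)^k (1 + λδk)`, and the
geometric series `∑ r^k = 1/(1-r)`, `∑ k r^k = r/(1-r)^2` bound the latter by `2/(λδ)`.
-/

open MeasureTheory

noncomputable def opNorm {n : ℕ} (A : Matrix (Fin n) (Fin n) ℝ) : ℝ :=
  ‖Matrix.toEuclideanCLM (𝕜 := ℝ) A‖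

noncomputable def enorm' {n : ℕ} (v : Fin n → ℝ) : ℝ :=
  Real.sqrt (∑ i, v i ^ 2)

section EuclideanNorm

variable {n : ℕ}

lemma enorm'_eq_norm_toLp (v : Fin n → ℝ) : enorm' v = ‖WithLp.toLp 2 v‖ := by
  simp [enorm', EuclideanSpace.norm_eq, sq_abs]

lemma enorm'_nonneg (v : Fin n → ℝ) : 0 ≤ enorm' v := Real.sqrt_nonneg _

lemma enorm'_smul (c : ℝ) (v : Fin n → ℝ) : enorm' (c • v) = |c| * enorm' v := by
  rw [enorm'_eq_norm_toLp, enorm'_eq_norm_toLp, WithLp.toLp_smul, norm_smul, Real.norm_eq_abs]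

lemma enorm'_sum_le {ι : Type*} (s : Finset ι) (f : ι → Fin n → ℝ) :
    enorm' (∑ k ∈ s, f k) ≤ ∑ k ∈ s, enorm' (f k) := by
  simp only [enorm'_eq_norm_toLp, WithLp.toLp_sum]
  exact norm_sum_le _ _

lemma enorm'_mulVec_le (A : Matrix (Fin n) (Fin n) ℝ) (v : Fin n → ℝ) :
    enorm' (A.mulVec v) ≤ opNorm A * enorm' v := by
  rw [enorm'_eq_norm_toLp, enorm'_eq_norm_toLp, ← Matrix.toEuclideanCLM_toLp]
  exact (Matrix.toEuclideanCLM (𝕜 := ℝ) A).le_opNorm _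

lemma opNorm_nonneg (A : Matrix (Fin n) (Fin n) ℝ) : 0 ≤ opNorm A := norm_nonneg _

lemma opNorm_mul_le (A B : Matrix (Fin n) (Fin n) ℝ) : opNorm (A * B) ≤ opNorm A * opNorm B := by
  unfold opNorm
  rw [map_mul]
  exact norm_mul_le _ _

end EuclideanNorm

lemma Real.rpow_le_one_add {β x : ℝ} (hβ₀ : 0 ≤ β) (hβ₁ : β ≤ 1) (hx : 0 ≤ x) :
    x ^ β ≤ 1 + x := by
  rcases le_or_gt x 1 with h | h
  · linarith [Real.rpow_le_one hx h hβ₀]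
  · linarith [Real.rpow_le_self_of_one_le h.le hβ₁]

lemma sum_geometric_mul_one_add_le {q : ℝ} (hq₀ : 0 < q) (hq₁ : q < 1) (s : Finset ℕ) :
    ∑ k ∈ s, (1 - q) ^ k * (1 + q * k) ≤ 2 / q := by
  have hr : ‖1 - q‖ < 1 := by rw [Real.norm_of_nonneg (by linarith)]; linarith
  have hgeom : HasSum (fun k : ℕ ↦ (1 - q) ^ k) q⁻¹ := by
    simpa using hasSum_geometric_of_norm_lt_one hr
  have harith : HasSum (fun k : ℕ ↦ (k : ℝ) * (1 - q) ^ k) ((1 - q) / q ^ 2) := by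
    simpa using hasSum_coe_mul_geometric_of_norm_lt_one hr
  have hsum := hgeom.add (harith.mul_left q)
  calc ∑ k ∈ s, (1 - q) ^ k * (1 + q * k)
      = ∑ k ∈ s, ((1 - q) ^ k + q * ((k : ℝ) * (1 - q) ^ k)) :=
        Finset.sum_congr rfl fun k _ ↦ by ring
    _ ≤ q⁻¹ + q * ((1 - q) / q ^ 2) :=
        sum_le_hasSum s (fun k _ ↦ by have := hq₁.le; positivity) hsum
    _ ≤ 2 / q := by
        rw [show q⁻¹ + q * ((1 - q) / q ^ 2) = (2 - q) / q by field_simp; ring]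
        gcongr
        linarith

lemma sum_geometric_mul_rpow_div_le {q β N : ℝ} (hq₀ : 0 < q) (hq₁ : q < 1) (hβ₀ : 0 ≤ β)
    (hβ₁ : β ≤ 1) (hN : 0 ≤ N) (s : Finset ℕ) :
    ∑ k ∈ s, (1 - q) ^ k * ((k : ℝ) / N) ^ β ≤ 2 / (q * (q * N) ^ β) := by
  have hterm (k : ℕ) : ((k : ℝ) / N) ^ β ≤ (1 + q * k) / (q * N) ^ β := by
    rw [← mul_div_mul_left (k : ℝ) N hq₀.ne', Real.div_rpow (by positivity) (by positivity)]
    gcongr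
    exact Real.rpow_le_one_add hβ₀ hβ₁ (by positivity)
  calc ∑ k ∈ s, (1 - q) ^ k * ((k : ℝ) / N) ^ β
      ≤ ∑ k ∈ s, (1 - q) ^ k * (1 + q * k) / (q * N) ^ β := by
        gcongr with k
        rw [mul_div_assoc]
        have : 0 ≤ 1 - q := by linarith
        gcongr
        exact hterm k
    _ ≤ 2 / q / (q * N) ^ β := by
        rw [← Finset.sum_div]
        gcongr
        exact sum_geometric_mul_one_add_le hq₀ hq₁ s
    _ = 2 / (q * (q * N) ^ β) := div_div _ _ _

theorem deterministic_bias_bound_general {p : ℕ}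
    (a : ℝ → Fin (p + 1) → ℝ) (C β : ℝ) (hC : 0 < C) (hβ₀ : 0 < β) (hβ₁ : β ≤ 1)
    (hHolder : ∀ u v : ℝ, enorm' (a u - a v) ≤ C * |u - v| ^ β)
    (F : Matrix (Fin (p + 1)) (Fin (p + 1)) ℝ)
    (Kn δ : ℝ) (hKn : 0 < Kn) (hδ : 0 < δ) :
    ∃ K > (0 : ℝ), ∀ lam : ℝ, 0 < lam → lam * δ < 1 →
      (∀ k : ℕ, opNorm (((1 : Matrix (Fin (p + 1)) (Fin (p + 1)) ℝ) - lam • F) ^ k)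
          ≤ Kn * (1 - lam * δ) ^ k) →
      ∀ N t : ℕ, 1 ≤ t → t ≤ N →
        enorm' (∑ k ∈ Finset.Icc 1 (t - 1),
            lam • ((((1 : Matrix (Fin (p + 1)) (Fin (p + 1)) ℝ) - lam • F) ^ k) * F).mulVec
              (a (((t : ℝ) - (k : ℝ)) / (N : ℝ)) - a ((t : ℝ) / (N : ℝ))))
          ≤ K / ((lam * (N : ℝ)) ^ β) := by
  have hF := opNorm_nonneg F
  refine ⟨2 * Kn * (opNorm F + 1) * C / δ ^ (β + 1), by positivity, ?_⟩
  intro lam hlam hlamδ hpow N t _ _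
  set P := (1 : Matrix (Fin (p + 1)) (Fin (p + 1)) ℝ) - lam • F
  set c := lam * Kn * (opNorm F + 1) * C
  have hincrement (k : ℕ) :
      enorm' (a (((t : ℝ) - k) / N) - a ((t : ℝ) / N)) ≤ C * ((k : ℝ) / N) ^ β := by
    have h := hHolder (((t : ℝ) - k) / N) ((t : ℝ) / N)
    rwa [show ((t : ℝ) - k) / N - t / N = -(k / N) by ring, abs_neg,
      abs_of_nonneg (by positivity)] at h
  have hterm (k : ℕ) :
      enorm' (lam • (P ^ k * F).mulVec (a (((t : ℝ) - k) / N) - a ((t : ℝ) / N)))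
        ≤ c * ((1 - lam * δ) ^ k * ((k : ℝ) / N) ^ β) := by
    have hq : 0 ≤ 1 - lam * δ := by linarith
    rw [enorm'_smul, abs_of_pos hlam]
    calc lam * enorm' ((P ^ k * F).mulVec (a (((t : ℝ) - k) / N) - a ((t : ℝ) / N)))
        ≤ lam * (opNorm (P ^ k) * opNorm F * (C * ((k : ℝ) / N) ^ β)) := by
          gcongr
          refine (enorm'_mulVec_le _ _).trans (mul_le_mul (opNorm_mul_le _ _) (hincrement k)
            (enorm'_nonneg _) (mul_nonneg (opNorm_nonneg _) (opNorm_nonneg _)))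
      _ ≤ lam * (Kn * (1 - lam * δ) ^ k * (opNorm F + 1) * (C * ((k : ℝ) / N) ^ β)) := by
          gcongr
          · exact hpow k
          · linarith
      _ = c * ((1 - lam * δ) ^ k * ((k : ℝ) / N) ^ β) := by ring
  calc _ ≤ ∑ k ∈ Finset.Icc 1 (t - 1), c * ((1 - lam * δ) ^ k * ((k : ℝ) / N) ^ β) :=
        (enorm'_sum_le _ _).trans (Finset.sum_le_sum fun k _ ↦ hterm k)
    _ = c * ∑ k ∈ Finset.Icc 1 (t - 1), (1 - lam * δ) ^ k * ((k : ℝ) / N) ^ β := by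
        rw [Finset.mul_sum]
    _ ≤ c * (2 / (lam * δ * (lam * δ * N) ^ β)) := by
        gcongr
        exact sum_geometric_mul_rpow_div_le (by positivity) hlamδ hβ₀.le hβ₁ N.cast_nonneg _
    _ = 2 * Kn * (opNorm F + 1) * C / δ ^ (β + 1) / (lam * N) ^ β := by
        rw [show lam * δ * N = δ * (lam * N) by ring, Real.mul_rpow hδ.le (by positivity),
          Real.rpow_add hδ, Real.rpow_one]
        simp only [c]
        field_simp

/-- Deterministic bias bound: if `a` is `β`-Hölder and `‖(I−λF)^k‖ ≤ Kn (1−λδ)^k`, then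
`|∑_{k=1}^{t−1} λ (I − λF)^k F (a((t−k)/N) − a(t/N))| = O(1/(λN)^β)` uniformly in
`t ≤ N`. -/
theorem deterministic_bias_bound {p : ℕ}
    (a : ℝ → Fin (p + 1) → ℝ) (C β : ℝ) (hC : 0 < C) (hβ₀ : 0 < β) (hβ₁ : β ≤ 1)
    (hHolder : ∀ u v : ℝ, enorm' (a u - a v) ≤ C * |u - v| ^ β)
    (F : Matrix (Fin (p + 1)) (Fin (p + 1)) ℝ) (hsymm : F.IsSymm) (hpos : F.PosDef)
    (Kn δ : ℝ) (hKn : 0 < Kn) (hδ : 0 < δ) :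
    ∃ K > (0 : ℝ), ∀ lam : ℝ, 0 < lam → lam * δ < 1 →
      (∀ k : ℕ, opNorm (((1 : Matrix (Fin (p + 1)) (Fin (p + 1)) ℝ) - lam • F) ^ k)
          ≤ Kn * (1 - lam * δ) ^ k) →
      ∀ N t : ℕ, 1 ≤ t → t ≤ N →
        enorm' (∑ k ∈ Finset.Icc 1 (t - 1),
            lam • ((((1 : Matrix (Fin (p + 1)) (Fin (p + 1)) ℝ) - lam • F) ^ k) * F).mulVec
              (a (((t : ℝ) - (k : ℝ)) / (N : ℝ)) - a ((t : ℝ) / (N : ℝ))))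
          ≤ K / ((lam * (N : ℝ)) ^ β) :=
  deterministic_bias_bound_general a C β hC hβ₀ hβ₁ hHolder F Kn δ hKn hδ
end
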